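/- arXiv:1812.02343 — 6 statements merged into one kernel-verified Lean document; each statement's English description precedes it below -/
import Mathlib

section
/- Two sublattices of ℤⁿ of index m, given by integer basis matrices U and V (rows expressing the basis vectors in terms of the standard basis, with |det U| = |det V| = m), are equal whenever U ≡ V (mod m) entrywise. -/
private lemma vecMul_mem_span_rows {n : ℕ} (U : Matrix (Fin n) (Fin n) ℤ)
    (c : Fin n → ℤ) : Matrix.vecMul c U ∈ Submodule.span ℤ (Set.range fun i => U i) := by
  rw [Submodule.mem_span_range_iff_exists_fun]
  refine ⟨c, funext fun j => ?_⟩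
  simp [Matrix.vecMul, dotProduct, Finset.sum_apply]

private lemma det_smul_mem_span_rows {n : ℕ} (U : Matrix (Fin n) (Fin n) ℤ)
    (y : Fin n → ℤ) : U.det • y ∈ Submodule.span ℤ (Set.range fun i => U i) := by
  have : U.det • y = Matrix.vecMul (Matrix.vecMul y U.adjugate) U := by
    rw [Matrix.vecMul_vecMul, Matrix.adjugate_mul]
    simp [Matrix.vecMul_one]
  rw [this]
  exact vecMul_mem_span_rows U _

private lemma span_le_of_mod_eq {n m : ℕ} (hm : 0 < m)
    (U V : Matrix (Fin n) (Fin n) ℤ)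
    (hU : U.det.natAbs = m)
    (h : ∀ i j, (m : ℤ) ∣ (U i j - V i j)) :
    Submodule.span ℤ (Set.range fun i => V i) ≤ Submodule.span ℤ (Set.range fun i => U i) := by
  rw [Submodule.span_le]
  rintro _ ⟨i, rfl⟩
  set w : Fin n → ℤ := fun j => (U i j - V i j) / m with hw
  have hmw : (m : ℤ) • w = fun j => U i j - V i j := by
    funext j
    exact Int.mul_ediv_cancel' (h i j)
  have hsmul : (m : ℤ) • w ∈ Submodule.span ℤ (Set.range fun i => U i) := by
    rcases Int.natAbs_eq U.det with hd | hd
    · have : (m : ℤ) • w = U.det • w := by rw [← hU, ← hd]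
      rw [this]; exact det_smul_mem_span_rows U w
    · have : (m : ℤ) • w = U.det • (-w) := by rw [← hU, hd]; simp
      rw [this]; exact det_smul_mem_span_rows U (-w)
  have hUi : U i ∈ Submodule.span ℤ (Set.range fun i => U i) :=
    Submodule.subset_span ⟨i, rfl⟩
  have : V i = U i - (m : ℤ) • w := by
    rw [hmw]; funext j; simp
  show V i ∈ _
  rw [this]
  exact Submodule.sub_mem _ hUi hsmul

/-- Two sublattices of `ℤⁿ` of index `m`, given by integer basis matrices `U` and `V`
(rows are the basis vectors), with `|det U| = |det V| = m`, coincide whenever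
`U ≡ V (mod m)` entrywise. -/
theorem sublattices_eq_of_mod_eq (n m : ℕ) (hm : 0 < m)
    (U V : Matrix (Fin n) (Fin n) ℤ)
    (hU : U.det.natAbs = m) (hV : V.det.natAbs = m)
    (h : ∀ i j, (m : ℤ) ∣ (U i j - V i j)) :
    Submodule.span ℤ (Set.range fun i => U i) = Submodule.span ℤ (Set.range fun i => V i) := by
  refine le_antisymm ?_ ?_
  · exact span_le_of_mod_eq hm V U hV (fun i j => by
      exact dvd_sub_comm.mp (h i j))
  · exact span_le_of_mod_eq hm U V hU h
end

section
/- If U and V are n×n integer matrices with |det U| = |det V| = m ≥ 1 and U ≡ V (mod m), then U·V⁻¹ is an integer matrix with determinant ±1 (a unimodular matrix). -/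
/-!
Over `ℚ` we have `U V⁻¹ = (det V)⁻¹ • U adj(V)`. Since `U ≡ V (mod det V)` entrywise,
`U adj(V) ≡ V adj(V) = det V • 1 ≡ 0 (mod det V)`, so every entry of `U V⁻¹` is an integer;
and `det (U V⁻¹) = det U / det V = ±1` because `|det U| = |det V| ≠ 0`.
-/

namespace Matrix

variable {n R K : Type*} [Fintype n] [DecidableEq n] [CommRing R] [Field K]

theorem det_dvd_mul_adjugate_apply {A B : Matrix n n R} (h : ∀ i j, B.det ∣ A i j - B i j)
    (i j : n) : B.det ∣ (A * B.adjugate) i j := by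
  have hsplit : A * B.adjugate = (A - B) * B.adjugate + B.det • (1 : Matrix n n R) := by
    rw [sub_mul, mul_adjugate, sub_add_cancel]
  rw [hsplit, add_apply, smul_apply, smul_eq_mul]
  refine dvd_add ?_ (dvd_mul_right _ _)
  rw [mul_apply]
  exact Finset.dvd_sum fun k _ => (h i k).mul_right _

theorem map_mul_map_inv (f : R →+* K) (A B : Matrix n n R) :
    A.map f * (B.map f)⁻¹ = (f B.det)⁻¹ • (A * B.adjugate).map f := by
  have hdet : (B.map f).det = f B.det := (f.map_det B).symm
  have hadj : (B.map f).adjugate = B.adjugate.map f := (f.map_adjugate B).symm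
  rw [inv_def, hdet, hadj, Ring.inverse_eq_inv', Matrix.mul_smul, Matrix.map_mul]

theorem det_map_mul_map_inv (f : R →+* K) (A B : Matrix n n R) :
    (A.map f * (B.map f)⁻¹).det = f A.det / f B.det := by
  rw [det_mul, det_nonsing_inv, Ring.inverse_eq_inv', div_eq_mul_inv, f.map_det, f.map_det,
    RingHom.mapMatrix_apply, RingHom.mapMatrix_apply]

end Matrix

/-- If `U, V` are `n×n` integer matrices with `|det U| = |det V| = m ≥ 1` and
`U ≡ V (mod m)`, then `U * V⁻¹` (computed over `ℚ`) is an integer matrix of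
determinant `±1`, i.e. unimodular. -/
theorem mul_inv_unimodular_of_mod_eq (n m : ℕ) (hm : 0 < m)
    (U V : Matrix (Fin n) (Fin n) ℤ)
    (hU : U.det.natAbs = m) (hV : V.det.natAbs = m)
    (h : ∀ i j, (m : ℤ) ∣ (U i j - V i j)) :
    (∀ i j, ∃ z : ℤ,
        ((U.map (Int.cast : ℤ → ℚ)) * (V.map (Int.cast : ℤ → ℚ))⁻¹) i j = (z : ℚ)) ∧
      (((U.map (Int.cast : ℤ → ℚ)) * (V.map (Int.cast : ℤ → ℚ))⁻¹).det = 1 ∨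
        ((U.map (Int.cast : ℤ → ℚ)) * (V.map (Int.cast : ℤ → ℚ))⁻¹).det = -1) := by
  have hV0 : (V.det : ℚ) ≠ 0 := by exact_mod_cast Int.natAbs_ne_zero.mp (hV ▸ hm.ne')
  have hUV : U.det = V.det ∨ U.det = -V.det := Int.natAbs_eq_natAbs_iff.mp (hU.trans hV.symm)
  have hdvd := Matrix.det_dvd_mul_adjugate_apply fun i j => Int.natAbs_dvd.mp (hV ▸ h i j)
  have hmul := Matrix.map_mul_map_inv (Int.castRingHom ℚ) U V
  have hdet := Matrix.det_map_mul_map_inv (Int.castRingHom ℚ) U V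
  simp only [Int.coe_castRingHom, eq_intCast] at hmul hdet
  refine ⟨fun i j => ?_, ?_⟩
  · obtain ⟨z, hz⟩ := hdvd i j
    refine ⟨z, ?_⟩
    rw [hmul, Matrix.smul_apply, Matrix.map_apply, hz, Int.cast_mul, smul_eq_mul,
      inv_mul_cancel_left₀ hV0]
  · rw [hdet]
    rcases hUV with hUV | hUV
    · exact Or.inl (by rw [hUV, div_self hV0])
    · exact Or.inr (by rw [hUV, Int.cast_neg, neg_div, div_self hV0])
end

section
/- The number of sublattices of index m in ℤⁿ equals Σ over all factorizations m = d₁d₂⋯d_n of d₁⁰ d₂¹ ⋯ d_n^{n-1}, where the sum runs over ordered n-tuples of positive integers with product m. -/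
/-- `subCount n m` is the number of sublattices (subgroups) of `ℤⁿ` of index `m`. -/
noncomputable def subCount (n m : ℕ) : ℕ :=
  Nat.card {H : AddSubgroup (Fin n → ℤ) // H.index = m}

/-!
Write `ℤⁿ⁺¹ = ℤ × ℤⁿ`. A subgroup `H` of index `m` meets `ℤⁿ` in a subgroup `K` of some index `e`,
and projects onto `dℤ` with `d * e = m`. Choosing `w` with `(d, w) ∈ H`, the subgroup `H` is
generated by `(d, w)` and `0 × K`, and it determines `w` exactly modulo `K`. Hence
`f_{n+1}(m) = ∑_{d e = m} e · f_n(e)`, which is also the recursion satisfied by the sum over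
factorizations `m = d₁ ⋯ d_{n+1}` (split off `d₁ = d`).
-/

open AddSubgroup

theorem Int.eq_zmultiples_index (S : AddSubgroup ℤ) : S = zmultiples (S.index : ℤ) := by
  obtain ⟨a, rfl⟩ := Int.subgroup_cyclic S
  rw [← zmultiples_eq_closure, Int.index_zmultiples, Int.zmultiples_natAbs]

namespace AddSubgroup

theorem index_eq_index_map_fst_mul_index_comap_inr {A G : Type*} [AddCommGroup A]
    [AddCommGroup G] (H : AddSubgroup (A × G)) :
    H.index = (H.map (AddMonoidHom.fst A G)).index * (H.comap (AddMonoidHom.inr A G)).index := by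
  have hker : (AddMonoidHom.fst A G).ker = (AddMonoidHom.inr A G).range := by
    ext ⟨a, g⟩
    simp [mem_prod, eq_comm]
  rw [index_map, (AddMonoidHom.fst A G).range_eq_top_of_surjective Prod.fst_surjective,
    index_top, mul_one, index_comap, ← hker, ← relIndex_sup_left, mul_comm,
    relIndex_mul_index le_sup_left]

variable {G : Type*} [AddCommGroup G]

def zmultiplesSupInr (d : ℤ) (w : G) (K : AddSubgroup G) : AddSubgroup (ℤ × G) :=
  zmultiples (d, w) ⊔ K.map (AddMonoidHom.inr ℤ G)

variable {d : ℤ} {w : G} {K : AddSubgroup G}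

theorem mem_zmultiplesSupInr {p : ℤ × G} :
    p ∈ zmultiplesSupInr d w K ↔ ∃ t : ℤ, p.1 = t * d ∧ p.2 - t • w ∈ K := by
  simp only [zmultiplesSupInr, mem_sup, mem_zmultiples_iff, mem_map]
  constructor
  · rintro ⟨_, ⟨t, rfl⟩, _, ⟨g, hg, rfl⟩, rfl⟩
    exact ⟨t, by simp [mul_comm], by simpa using hg⟩
  · rintro ⟨t, h1, h2⟩
    exact ⟨_, ⟨t, rfl⟩, _, ⟨_, h2, rfl⟩, by ext <;> simp [h1, mul_comm]⟩

theorem map_fst_zmultiplesSupInr :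
    (zmultiplesSupInr d w K).map (AddMonoidHom.fst ℤ G) = zmultiples d := by
  ext k
  simp only [mem_map, mem_zmultiplesSupInr, Int.mem_zmultiples_iff, AddMonoidHom.coe_fst]
  constructor
  · rintro ⟨p, ⟨t, ht, -⟩, rfl⟩
    exact ⟨t, by rw [ht, mul_comm]⟩
  · rintro ⟨t, rfl⟩
    exact ⟨(d * t, t • w), ⟨t, mul_comm d t, by simp⟩, rfl⟩

theorem comap_inr_zmultiplesSupInr (hd : d ≠ 0) :
    (zmultiplesSupInr d w K).comap (AddMonoidHom.inr ℤ G) = K := by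
  ext g
  simp only [mem_comap, mem_zmultiplesSupInr, AddMonoidHom.inr_apply]
  constructor
  · rintro ⟨t, ht, hg⟩
    obtain rfl : t = 0 := by simpa [hd, eq_comm] using ht
    simpa using hg
  · exact fun hg => ⟨0, by simp, by simpa using hg⟩

theorem index_zmultiplesSupInr (hd : d ≠ 0) :
    (zmultiplesSupInr d w K).index = d.natAbs * K.index := by
  rw [index_eq_index_map_fst_mul_index_comap_inr, map_fst_zmultiplesSupInr,
    comap_inr_zmultiplesSupInr hd, Int.index_zmultiples]

theorem sub_mem_of_mem_zmultiplesSupInr {w' : G} (hd : d ≠ 0)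
    (h : (d, w') ∈ zmultiplesSupInr d w K) : w' - w ∈ K := by
  obtain ⟨t, ht, hw⟩ := mem_zmultiplesSupInr.mp h
  obtain rfl : t = 1 := by simpa [hd] using (mul_left_eq_self₀.mp ht.symm)
  simpa using hw

theorem eq_zmultiplesSupInr {H : AddSubgroup (ℤ × G)}
    (hH : H.map (AddMonoidHom.fst ℤ G) = zmultiples d) (hw : (d, w) ∈ H) :
    H = zmultiplesSupInr d w (H.comap (AddMonoidHom.inr ℤ G)) := by
  refine le_antisymm (fun ⟨k, g⟩ hp => ?_)
    (sup_le (zmultiples_le.mpr hw) (map_le_iff_le_comap.mpr le_rfl))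
  obtain ⟨t, rfl⟩ := Int.mem_zmultiples_iff.mp (hH ▸ mem_map_of_mem _ hp : k ∈ zmultiples d)
  refine mem_zmultiplesSupInr.mpr ⟨t, mul_comm d t, ?_⟩
  have := H.sub_mem hp (H.zsmul_mem hw t)
  simpa [mem_comap, mul_comm] using this

theorem exists_index_map_fst_mem (H : AddSubgroup (ℤ × G)) :
    ∃ w : G, (((H.map (AddMonoidHom.fst ℤ G)).index : ℤ), w) ∈ H := by
  have h := mem_zmultiples ((H.map (AddMonoidHom.fst ℤ G)).index : ℤ)
  rw [← Int.eq_zmultiples_index] at h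
  obtain ⟨p, hp, hp1⟩ := mem_map.mp h
  exact ⟨p.2, by simpa [← hp1] using hp⟩

end AddSubgroup

section Parametrization

variable (G : Type*) [AddCommGroup G] (m : ℕ)

/-- `((d, e), K, w + K)` stands for the subgroup of `ℤ × G` generated by `(d, w)` and `0 × K`. -/
abbrev ProdIntSubgroupData :=
  Σ p : m.divisorsAntidiagonal, Σ K : {K : AddSubgroup G // K.index = p.1.2}, G ⧸ K.1

variable {G m}

theorem ProdIntSubgroupData.ext {y y' : ProdIntSubgroupData G m} (h₁ : y.1.1.1 = y'.1.1.1)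
    (h₂ : y.2.1.1 = y'.2.1.1) (a : G) (ha : (a : G ⧸ y.2.1.1) = y.2.2)
    (ha' : (a : G ⧸ y'.2.1.1) = y'.2.2) : y = y' := by
  obtain ⟨⟨⟨d, e⟩, hp⟩, ⟨K, hK⟩, x⟩ := y
  obtain ⟨⟨⟨d', e'⟩, hp'⟩, ⟨K', hK'⟩, x'⟩ := y'
  dsimp only at h₁ h₂ hK hK' ha ha'
  subst h₁ h₂ hK hK' ha ha'
  rfl

noncomputable def ProdIntSubgroupData.ofSubgroup (hm : m ≠ 0)
    (H : {H : AddSubgroup (ℤ × G) // H.index = m}) : ProdIntSubgroupData G m :=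
  ⟨⟨((H.1.map (AddMonoidHom.fst ℤ G)).index, (H.1.comap (AddMonoidHom.inr ℤ G)).index),
      Nat.mem_divisorsAntidiagonal.mpr
        ⟨(index_eq_index_map_fst_mul_index_comap_inr H.1).symm.trans H.2, hm⟩⟩,
    ⟨H.1.comap (AddMonoidHom.inr ℤ G), rfl⟩, H.1.exists_index_map_fst_mem.choose⟩

theorem ProdIntSubgroupData.fst_ne_zero (y : ProdIntSubgroupData G m) : y.1.1.1 ≠ 0 :=
  (Nat.pos_of_mem_divisors (Nat.fst_mem_divisors_of_mem_antidiagonal y.1.2)).ne'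

noncomputable def ProdIntSubgroupData.toSubgroup (y : ProdIntSubgroupData G m) :
    {H : AddSubgroup (ℤ × G) // H.index = m} :=
  ⟨zmultiplesSupInr (y.1.1.1 : ℤ) y.2.2.out y.2.1.1, by
    rw [index_zmultiplesSupInr (Int.natCast_ne_zero.mpr y.fst_ne_zero), Int.natAbs_natCast,
      y.2.1.2, (Nat.mem_divisorsAntidiagonal.mp y.1.2).1]⟩

noncomputable def prodIntSubgroupDataEquiv (hm : m ≠ 0) :
    {H : AddSubgroup (ℤ × G) // H.index = m} ≃ ProdIntSubgroupData G m where
  toFun := ProdIntSubgroupData.ofSubgroup hm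
  invFun := ProdIntSubgroupData.toSubgroup
  left_inv H := by
    have hw := H.1.exists_index_map_fst_mem.choose_spec
    refine Subtype.ext (eq_zmultiplesSupInr (Int.eq_zmultiples_index _) ?_).symm
    dsimp only [ProdIntSubgroupData.ofSubgroup]
    generalize H.1.exists_index_map_fst_mem.choose = w at hw ⊢
    have hout : ((w : G ⧸ H.1.comap (AddMonoidHom.inr ℤ G)).out - w) ∈
        H.1.comap (AddMonoidHom.inr ℤ G) :=
      QuotientAddGroup.eq_iff_sub_mem.mp (QuotientAddGroup.out_eq' _)
    have := H.1.add_mem hw hout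
    simp only [AddMonoidHom.inr_apply, Prod.mk_add_mk, add_zero, add_sub_cancel] at this
    exact this
  right_inv y := by
    have hd : (y.1.1.1 : ℤ) ≠ 0 := Int.natCast_ne_zero.mpr y.fst_ne_zero
    refine ProdIntSubgroupData.ext ?_ ?_ _ rfl ?_
    · simp [ProdIntSubgroupData.ofSubgroup, ProdIntSubgroupData.toSubgroup,
        map_fst_zmultiplesSupInr]
    · exact comap_inr_zmultiplesSupInr hd
    · have hw := y.toSubgroup.1.exists_index_map_fst_mem.choose_spec
      generalize y.toSubgroup.1.exists_index_map_fst_mem.choose = w at hw ⊢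
      simp only [ProdIntSubgroupData.toSubgroup, map_fst_zmultiplesSupInr, Int.index_zmultiples,
        Int.natAbs_natCast] at hw
      rw [← QuotientAddGroup.out_eq' y.2.2, QuotientAddGroup.eq_iff_sub_mem]
      exact sub_mem_of_mem_zmultiplesSupInr hd hw

instance (p : m.divisorsAntidiagonal) (K : {K : AddSubgroup G // K.index = p.1.2}) :
    Finite (G ⧸ K.1) :=
  Nat.finite_of_card_ne_zero <| by
    rw [← index_eq_card, K.2]
    exact (Nat.pos_of_mem_divisors (Nat.snd_mem_divisors_of_mem_antidiagonal p.2)).ne'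

theorem finite_index_prod_int (hm : m ≠ 0)
    (hfin : ∀ e, e ∣ m → Finite {K : AddSubgroup G // K.index = e}) :
    Finite {H : AddSubgroup (ℤ × G) // H.index = m} := by
  have (p : m.divisorsAntidiagonal) : Finite {K : AddSubgroup G // K.index = p.1.2} :=
    hfin _ (Nat.dvd_of_mem_divisors (Nat.snd_mem_divisors_of_mem_antidiagonal p.2))
  exact Finite.of_equiv _ (prodIntSubgroupDataEquiv hm).symm

theorem card_index_prod_int (hm : m ≠ 0)
    (hfin : ∀ e, e ∣ m → Finite {K : AddSubgroup G // K.index = e}) :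
    Nat.card {H : AddSubgroup (ℤ × G) // H.index = m} =
      ∑ p ∈ m.divisorsAntidiagonal, Nat.card {K : AddSubgroup G // K.index = p.2} * p.2 := by
  have (p : m.divisorsAntidiagonal) : Finite {K : AddSubgroup G // K.index = p.1.2} :=
    hfin _ (Nat.dvd_of_mem_divisors (Nat.snd_mem_divisors_of_mem_antidiagonal p.2))
  rw [Nat.card_congr (prodIntSubgroupDataEquiv hm), Nat.card_sigma,
    ← Finset.sum_coe_sort m.divisorsAntidiagonal]
  refine Finset.sum_congr rfl fun p _ => ?_
  have := Fintype.ofFinite {K : AddSubgroup G // K.index = p.1.2}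
  simp only [Nat.card_sigma, ← index_eq_card]
  rw [Finset.sum_congr rfl fun K _ => K.2, Finset.sum_const, Finset.card_univ, smul_eq_mul,
    Nat.card_eq_fintype_card]

end Parametrization

def AddEquiv.subgroupIndexEqCongr {G G' : Type*} [AddGroup G] [AddGroup G'] (e : G ≃+ G')
    (m : ℕ) : {H : AddSubgroup G // H.index = m} ≃ {H : AddSubgroup G' // H.index = m} :=
  e.mapAddSubgroup.toEquiv.subtypeEquiv fun H => by simp

theorem finite_index_pi_int (n : ℕ) {m : ℕ} (hm : m ≠ 0) :
    Finite {H : AddSubgroup (Fin n → ℤ) // H.index = m} := by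
  induction n generalizing m with
  | zero => infer_instance
  | succ n ih =>
    have := finite_index_prod_int hm fun e he => ih (ne_zero_of_dvd_ne_zero hm he)
    exact Finite.of_equiv _
      ((Fin.consLinearEquiv ℤ fun _ => ℤ).toAddEquiv.subgroupIndexEqCongr m)

theorem subCount_succ (n : ℕ) {m : ℕ} (hm : m ≠ 0) :
    subCount (n + 1) m = ∑ p ∈ m.divisorsAntidiagonal, subCount n p.2 * p.2 := by
  rw [subCount, ← Nat.card_congr
      ((Fin.consLinearEquiv ℤ fun _ => ℤ).toAddEquiv.subgroupIndexEqCongr m),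
    card_index_prod_int hm fun e he => finite_index_pi_int n (ne_zero_of_dvd_ne_zero hm he)]
  rfl

theorem subCount_zero (m : ℕ) : subCount 0 m = if m = 1 then 1 else 0 := by
  have hidx (H : AddSubgroup (Fin 0 → ℤ)) : H.index = 1 :=
    index_eq_one.mpr (Subsingleton.elim _ _)
  split_ifs with h
  · subst h
    exact Nat.card_eq_one_iff_unique.mpr
      ⟨⟨fun _ _ => Subtype.ext (Subsingleton.elim _ _)⟩, ⟨⟨⊤, index_top⟩⟩⟩
  · have : IsEmpty {H : AddSubgroup (Fin 0 → ℤ) // H.index = m} := ⟨fun H => h (H.2 ▸ hidx H.1)⟩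
    exact Nat.card_of_isEmpty

theorem Nat.sum_finMulAntidiag_succ {M : Type*} [AddCommMonoid M] (n m : ℕ)
    (F : (Fin (n + 1) → ℕ) → M) :
    ∑ f ∈ finMulAntidiag (n + 1) m, F f =
      ∑ p ∈ m.divisorsAntidiagonal, ∑ c ∈ finMulAntidiag n p.2, F (Fin.cons p.1 c) := by
  rw [Finset.sum_sigma']
  refine Finset.sum_nbij' (fun f => ⟨(f 0, ∏ i : Fin n, f i.succ), Fin.tail f⟩)
    (fun x => Fin.cons x.1.1 x.2) ?_ ?_ (fun f _ => Fin.cons_self_tail f) ?_ ?_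
  · intro f
    simp only [mem_finMulAntidiag, Fin.prod_univ_succ, Finset.mem_sigma,
      mem_divisorsAntidiagonal]
    exact fun ⟨h, hm⟩ => ⟨⟨h, hm⟩, rfl, right_ne_zero_of_mul (h ▸ hm)⟩
  · rintro ⟨⟨a, e⟩, c⟩
    simp only [Finset.mem_sigma, mem_divisorsAntidiagonal, mem_finMulAntidiag,
      Fin.prod_univ_succ, Fin.cons_zero, Fin.cons_succ]
    rintro ⟨⟨h, hm⟩, rfl, -⟩
    exact ⟨h, hm⟩
  · rintro ⟨⟨a, e⟩, c⟩
    simp only [Finset.mem_sigma, mem_finMulAntidiag]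
    rintro ⟨-, rfl, -⟩
    simp
  · exact fun f _ => by rw [Fin.cons_self_tail]

theorem Fin.prod_cons_pow_val {M : Type*} [CommMonoid M] {n : ℕ} (a : M) (c : Fin n → M) :
    ∏ i : Fin (n + 1), (Fin.cons a c : Fin (n + 1) → M) i ^ (i : ℕ) =
      (∏ i, c i ^ (i : ℕ)) * ∏ i, c i := by
  simp [Fin.prod_univ_succ, pow_succ, Finset.prod_mul_distrib]

theorem Nat.filter_piFinset_Icc_prod_eq_finMulAntidiag (n : ℕ) {m : ℕ} (hm : m ≠ 0) :
    {d ∈ Fintype.piFinset fun _ : Fin n => Finset.Icc 1 m | ∏ i, d i = m} =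
      finMulAntidiag n m := by
  ext d
  simp only [Finset.mem_filter, Fintype.mem_piFinset, Finset.mem_Icc, mem_finMulAntidiag]
  refine ⟨fun h => ⟨h.2, hm⟩, fun ⟨h, _⟩ => ⟨fun i => ?_, h⟩⟩
  have hdvd : d i ∣ m := h ▸ Finset.dvd_prod_of_mem d (Finset.mem_univ i)
  exact ⟨Nat.pos_of_dvd_of_pos hdvd (Nat.pos_of_ne_zero hm),
    Nat.le_of_dvd (Nat.pos_of_ne_zero hm) hdvd⟩

theorem subCount_eq_sum_finMulAntidiag (n : ℕ) {m : ℕ} (hm : m ≠ 0) :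
    subCount n m = ∑ d ∈ Nat.finMulAntidiag n m, ∏ i, d i ^ (i : ℕ) := by
  induction n generalizing m with
  | zero =>
    rw [subCount_zero]
    split_ifs with h
    · simp [h, Nat.finMulAntidiag_one]
    · simp [Nat.finMulAntidiag_zero_left h]
  | succ n ih =>
    rw [subCount_succ n hm, Nat.sum_finMulAntidiag_succ]
    refine Finset.sum_congr rfl fun p hp => ?_
    rw [ih (Nat.pos_of_mem_divisors (Nat.snd_mem_divisors_of_mem_antidiagonal hp)).ne',
      Finset.sum_mul]
    refine Finset.sum_congr rfl fun c hc => ?_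
    rw [Fin.prod_cons_pow_val, Nat.prod_eq_of_mem_finMulAntidiag hc]

/-- Baake's formula: the number of sublattices of `ℤⁿ` of index `m` equals
`∑ d₁⁰d₂¹⋯d_n^{n-1}` over ordered factorizations `m = d₁d₂⋯d_n` into positive integers. -/
theorem subCount_eq_sum_factorizations (n m : ℕ) (hm : 1 ≤ m) :
    subCount n m =
      ∑ d ∈ (Fintype.piFinset fun _ : Fin n => Finset.Icc 1 m) |>.filter
          (fun d => ∏ i, d i = m),
        ∏ i : Fin n, d i ^ (i : ℕ) := by
  rw [Nat.filter_piFinset_Icc_prod_eq_finMulAntidiag n (Nat.one_le_iff_ne_zero.mp hm),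
    subCount_eq_sum_finMulAntidiag n (Nat.one_le_iff_ne_zero.mp hm)]
end

section
/- For every positive integer m and n ≥ 1, the number f_n(m) of sublattices of ℤⁿ of index m satisfies m^{n-1} ≤ f_n(m) ≤ m^n. -/
theorem card_addMonoidHom_zmod (M : Type*) [AddCommGroup M] [Module.Free ℤ M] [Module.Finite ℤ M]
    (d : ℕ) [NeZero d] : Nat.card (M →+ ZMod d) = d ^ Module.finrank ℤ M := by
  rw [Nat.card_congr ((addMonoidHomLequivInt ℤ).toEquiv.trans
    ((Module.finBasis ℤ M).constr ℤ).symm.toEquiv)]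
  simp [Nat.card_eq_fintype_card, ZMod.card]

theorem Nat.div_ne_zero_of_mem_divisors {m d : ℕ} (hd : d ∈ m.divisors) : m / d ≠ 0 :=
  (Nat.div_pos (Nat.divisor_le hd) (Nat.pos_of_mem_divisors hd)).ne'

theorem Nat.card_sigma_le_card_mul {α : Type*} {β : α → Type*} [Finite α] [∀ a, Finite (β a)]
    {c : ℕ} (h : ∀ a, Nat.card (β a) ≤ c) : Nat.card (Σ a, β a) ≤ Nat.card α * c := by
  have := Fintype.ofFinite α
  rw [Nat.card_sigma, Nat.card_eq_fintype_card, ← Finset.card_univ, ← smul_eq_mul,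
    ← Finset.sum_const]
  exact Finset.sum_le_sum fun a _ => h a

namespace AddSubgroup

theorem int_mem_iff_intCast_eq_zero (S : AddSubgroup ℤ) (t : ℤ) :
    t ∈ S ↔ (t : ZMod S.index) = 0 := by
  obtain ⟨a, rfl⟩ := Int.subgroup_cyclic S
  rw [← zmultiples_eq_closure, Int.index_zmultiples, Int.mem_zmultiples_iff,
    ZMod.intCast_zmod_eq_zero_iff_dvd, Int.natAbs_dvd]

variable {G : Type*} [AddCommGroup G]

noncomputable def axisIndex (H : AddSubgroup (ℤ × G)) : ℕ :=
  (H.comap (AddMonoidHom.inl ℤ G)).index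

theorem index_eq_axisIndex_mul_index_map_snd (H : AddSubgroup (ℤ × G)) :
    H.index = axisIndex H * (H.map (AddMonoidHom.snd ℤ G)).index := by
  have range_inl : (AddMonoidHom.inl ℤ G).range = (AddMonoidHom.snd ℤ G).ker := by
    ext ⟨t, v⟩
    simp [eq_comm, mem_prod]
  rw [axisIndex, index_comap, index_map, (AddMonoidHom.snd ℤ G).range_eq_top_of_surjective
    Prod.snd_surjective, index_top, mul_one, range_inl, ← relIndex_sup_left,
    relIndex_mul_index le_sup_left]

theorem mk_zero_mem_iff (H : AddSubgroup (ℤ × G)) (t : ℤ) :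
    ((t, 0) : ℤ × G) ∈ H ↔ (t : ZMod (axisIndex H)) = 0 :=
  int_mem_iff_intCast_eq_zero (H.comap (AddMonoidHom.inl ℤ G)) t

open Classical in
noncomputable def height (H : AddSubgroup (ℤ × G)) (v : G) : ℤ :=
  if h : ∃ t : ℤ, (t, v) ∈ H then h.choose else 0

theorem height_mem {H : AddSubgroup (ℤ × G)} {v : G} (hv : v ∈ H.map (AddMonoidHom.snd ℤ G)) :
    (height H v, v) ∈ H := by
  have h : ∃ t : ℤ, (t, v) ∈ H := by simpa using hv
  rw [height, dif_pos h]
  exact h.choose_spec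

theorem mem_iff_height (H : AddSubgroup (ℤ × G)) (t : ℤ) (v : G) :
    (t, v) ∈ H ↔ v ∈ H.map (AddMonoidHom.snd ℤ G) ∧ (t : ZMod (axisIndex H)) = height H v := by
  by_cases hv : v ∈ H.map (AddMonoidHom.snd ℤ G)
  · have split : ((t, v) : ℤ × G) = (t - height H v, 0) + (height H v, v) := by simp
    rw [split, add_mem_cancel_right (height_mem hv), mk_zero_mem_iff, Int.cast_sub, sub_eq_zero,
      and_iff_right hv]
  · exact iff_of_false (fun h => hv ⟨_, h, rfl⟩) (fun h => hv h.1)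

noncomputable def heightHom (H : AddSubgroup (ℤ × G)) :
    H.map (AddMonoidHom.snd ℤ G) →+ ZMod (axisIndex H) where
  toFun v := height H v
  map_zero' := by
    simpa using ((mem_iff_height H 0 0).mp H.zero_mem).2.symm
  map_add' v w := by
    have hsum := ((mem_iff_height H _ _).mp (H.add_mem (height_mem v.2) (height_mem w.2))).2
    push_cast at hsum
    exact hsum.symm

theorem heightHom_apply (H : AddSubgroup (ℤ × G)) (v : H.map (AddMonoidHom.snd ℤ G)) :
    heightHom H v = height H v := rfl

def graphOn (K : AddSubgroup G) (d : ℕ) (φ : K →+ ZMod d) : AddSubgroup (ℤ × G) where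
  carrier := {p | ∃ h : p.2 ∈ K, (p.1 : ZMod d) = φ ⟨p.2, h⟩}
  zero_mem' := ⟨K.zero_mem, by rw [Prod.fst_zero, Int.cast_zero]; exact (map_zero φ).symm⟩
  add_mem' := by
    rintro ⟨s, v⟩ ⟨t, w⟩ ⟨hv, hs⟩ ⟨hw, ht⟩
    refine ⟨K.add_mem hv hw, ?_⟩
    simp only [Prod.fst_add, Prod.snd_add, Int.cast_add, hs, ht, ← map_add]
    rfl
  neg_mem' := by
    rintro ⟨t, v⟩ ⟨hv, ht⟩
    refine ⟨K.neg_mem hv, ?_⟩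
    simp only [Prod.fst_neg, Prod.snd_neg, Int.cast_neg, ht, ← map_neg]
    rfl

theorem mem_graphOn {K : AddSubgroup G} {d : ℕ} {φ : K →+ ZMod d} {p : ℤ × G} :
    p ∈ graphOn K d φ ↔ ∃ h : p.2 ∈ K, (p.1 : ZMod d) = φ ⟨p.2, h⟩ :=
  Iff.rfl

theorem graphOn_heightHom (H : AddSubgroup (ℤ × G)) :
    graphOn (H.map (AddMonoidHom.snd ℤ G)) (axisIndex H) (heightHom H) = H := by
  ext ⟨t, v⟩
  simp only [mem_graphOn, heightHom_apply, exists_prop, mem_iff_height H t v]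

theorem axisIndex_graphOn (K : AddSubgroup G) (d : ℕ) (φ : K →+ ZMod d) :
    axisIndex (graphOn K d φ) = d := by
  have : (graphOn K d φ).comap (AddMonoidHom.inl ℤ G) = (Int.castAddHom (ZMod d)).ker := by
    ext t
    simp only [mem_comap, AddMonoidHom.inl_apply, mem_graphOn, AddMonoidHom.mem_ker]
    exact ⟨fun ⟨_, ht⟩ => ht.trans (map_zero φ), fun ht => ⟨K.zero_mem, ht.trans (map_zero φ).symm⟩⟩
  rw [axisIndex, this, index_ker, AddMonoidHom.range_eq_top_of_surjective _ ZMod.intCast_surjective,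
    card_top, Nat.card_zmod]

theorem map_snd_graphOn (K : AddSubgroup G) (d : ℕ) (φ : K →+ ZMod d) :
    (graphOn K d φ).map (AddMonoidHom.snd ℤ G) = K := by
  ext v
  constructor
  · rintro ⟨_, ⟨hv, -⟩, rfl⟩
    exact hv
  · intro hv
    exact ⟨((φ ⟨v, hv⟩).cast, v), ⟨hv, ZMod.intCast_zmod_cast _⟩, rfl⟩

theorem index_graphOn (K : AddSubgroup G) (d : ℕ) (φ : K →+ ZMod d) :
    (graphOn K d φ).index = d * K.index := by
  rw [index_eq_axisIndex_mul_index_map_snd, axisIndex_graphOn, map_snd_graphOn]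

theorem graphOn_injective (K : AddSubgroup G) (d : ℕ) : Function.Injective (graphOn K d) := by
  intro φ ψ h
  ext ⟨v, hv⟩
  have hφ : (((φ ⟨v, hv⟩).cast : ℤ), v) ∈ graphOn K d φ := ⟨hv, ZMod.intCast_zmod_cast _⟩
  rw [h] at hφ
  exact (ZMod.intCast_zmod_cast _).symm.trans hφ.2

theorem card_addMonoidHom_le_card_index_eq (m : ℕ)
    [Finite {H : AddSubgroup (ℤ × G) // H.index = m}] :
    Nat.card (G →+ ZMod m) ≤ Nat.card {H : AddSubgroup (ℤ × G) // H.index = m} := by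
  let graph (φ : G →+ ZMod m) : {H : AddSubgroup (ℤ × G) // H.index = m} :=
    ⟨graphOn ⊤ m (φ.comp (⊤ : AddSubgroup G).subtype), by rw [index_graphOn, index_top, mul_one]⟩
  refine Nat.card_le_card_of_injective graph fun φ ψ h => AddMonoidHom.ext fun v => ?_
  exact DFunLike.congr_fun (graphOn_injective _ _ (congrArg Subtype.val h)) ⟨v, mem_top v⟩

theorem axisIndex_mem_divisors {H : AddSubgroup (ℤ × G)} {m : ℕ} (hH : H.index = m)
    (hm : m ≠ 0) : axisIndex H ∈ m.divisors :=
  Nat.mem_divisors.mpr ⟨Dvd.intro _ (hH ▸ index_eq_axisIndex_mul_index_map_snd H).symm, hm⟩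

theorem index_map_snd_eq_div {H : AddSubgroup (ℤ × G)} {m : ℕ} (hH : H.index = m) (hm : m ≠ 0) :
    (H.map (AddMonoidHom.snd ℤ G)).index = m / axisIndex H :=
  Nat.eq_div_of_mul_eq_right (Nat.pos_of_mem_divisors (axisIndex_mem_divisors hH hm)).ne'
    (hH ▸ index_eq_axisIndex_mul_index_map_snd H).symm

noncomputable def toDivisorSigma (m : ℕ) [NeZero m] (H : {H : AddSubgroup (ℤ × G) // H.index = m}) :
    Σ d : m.divisors, Σ K : {K : AddSubgroup G // K.index = m / d}, K.1 →+ ZMod d :=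
  ⟨⟨axisIndex H.1, axisIndex_mem_divisors H.2 (NeZero.ne m)⟩,
    ⟨H.1.map (AddMonoidHom.snd ℤ G), index_map_snd_eq_div H.2 (NeZero.ne m)⟩, heightHom H.1⟩

theorem toDivisorSigma_injective (m : ℕ) [NeZero m] :
    Function.Injective (toDivisorSigma (G := G) m) := by
  intro H H' h
  apply Subtype.ext
  rw [← graphOn_heightHom H.1, ← graphOn_heightHom H'.1]
  exact congrArg (fun x => graphOn x.2.1.1 x.1 x.2.2) h

-- A subgroup of index `m` contains `m • (ι → ℤ)`, so it is determined by its image mod `m`.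
instance finite_index_eq_pi_int (ι : Type*) [Finite ι] (m : ℕ) [NeZero m] :
    Finite {H : AddSubgroup (ι → ℤ) // H.index = m} := by
  let reduce := (Int.castAddHom (ZMod m)).compLeft ι
  have ker_le : ∀ H : {H : AddSubgroup (ι → ℤ) // H.index = m}, reduce.ker ≤ H.1 := by
    rintro ⟨H, rfl⟩ x hx
    have hdvd i : (H.index : ℤ) ∣ x i :=
      (ZMod.intCast_zmod_eq_zero_iff_dvd _ _).mp (congrFun hx i)
    have hx : x = H.index • fun i => x i / H.index :=
      funext fun i => (Int.mul_ediv_cancel' (hdvd i)).symm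
    rw [hx]
    exact H.nsmul_index_mem _
  refine Finite.of_injective (fun H => H.1.map reduce)
    fun H H' (h : H.1.map reduce = H'.1.map reduce) => Subtype.ext ?_
  rw [← sup_of_le_left (ker_le H), ← comap_map_eq, h, comap_map_eq, sup_of_le_left (ker_le H')]

instance finite_addMonoidHom_zmod {n : ℕ} (K : AddSubgroup (Fin n → ℤ)) (d : ℕ) [NeZero d] :
    Finite (K →+ ZMod d) :=
  Nat.finite_of_card_ne_zero <|
    (card_addMonoidHom_zmod (toIntSubmodule K) d).trans_ne (pow_ne_zero _ (NeZero.ne d))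

theorem card_addMonoidHom_zmod_le {n : ℕ} (K : AddSubgroup (Fin n → ℤ)) (d : ℕ) [NeZero d] :
    Nat.card (K →+ ZMod d) ≤ d ^ n := by
  have rank_le := Submodule.finrank_le (toIntSubmodule K)
  rw [Module.finrank_fin_fun] at rank_le
  exact (card_addMonoidHom_zmod (toIntSubmodule K) d).trans_le
    (Nat.pow_le_pow_right (Nat.pos_of_neZero d) rank_le)

def indexEqCongr {A B : Type*} [AddGroup A] [AddGroup B] (e : A ≃+ B) (m : ℕ) :
    {H : AddSubgroup A // H.index = m} ≃ {H : AddSubgroup B // H.index = m} :=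
  e.mapAddSubgroup.toEquiv.subtypeEquiv fun H => by simp

end AddSubgroup

open AddSubgroup

def consAddEquiv (n : ℕ) : ℤ × (Fin n → ℤ) ≃+ (Fin (n + 1) → ℤ) :=
  (Fin.consLinearEquiv ℤ fun _ => ℤ).toAddEquiv

theorem subCount_succ_s11 (n m : ℕ) :
    subCount (n + 1) m = Nat.card {H : AddSubgroup (ℤ × (Fin n → ℤ)) // H.index = m} :=
  Nat.card_congr (indexEqCongr (consAddEquiv n) m).symm

instance (n m : ℕ) [NeZero m] : Finite {H : AddSubgroup (ℤ × (Fin n → ℤ)) // H.index = m} :=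
  Finite.of_equiv _ (indexEqCongr (consAddEquiv n) m).symm

theorem subCount_succ_le (n m : ℕ) [NeZero m] :
    subCount (n + 1) m ≤ ∑ d ∈ m.divisors, subCount n (m / d) * d ^ n := by
  have (d : m.divisors) : NeZero (d : ℕ) := ⟨(Nat.pos_of_mem_divisors d.2).ne'⟩
  have (d : m.divisors) : NeZero (m / d) := ⟨Nat.div_ne_zero_of_mem_divisors d.2⟩
  rw [subCount_succ_s11, ← Finset.sum_coe_sort]
  calc _ ≤ _ := Nat.card_le_card_of_injective _ (toDivisorSigma_injective m)
    _ = _ := Nat.card_sigma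
    _ ≤ _ := Finset.sum_le_sum fun d _ =>
      Nat.card_sigma_le_card_mul fun K => card_addMonoidHom_zmod_le K.1 d

theorem subCount_le_pow (n m : ℕ) [NeZero m] : subCount n m ≤ m ^ n := by
  induction n generalizing m with
  | zero =>
    rw [pow_zero, subCount, Finite.card_le_one_iff_subsingleton]
    infer_instance
  | succ n ih =>
    calc subCount (n + 1) m ≤ ∑ d ∈ m.divisors, subCount n (m / d) * d ^ n := subCount_succ_le n m
      _ ≤ ∑ d ∈ m.divisors, m ^ n := Finset.sum_le_sum fun d hd => by
        have : NeZero (m / d) := ⟨Nat.div_ne_zero_of_mem_divisors hd⟩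
        calc subCount n (m / d) * d ^ n ≤ (m / d) ^ n * d ^ n := Nat.mul_le_mul_right _ (ih _)
          _ = m ^ n := by rw [← Nat.mul_pow, Nat.div_mul_cancel (Nat.dvd_of_mem_divisors hd)]
      _ = m.divisors.card * m ^ n := by rw [Finset.sum_const, smul_eq_mul]
      _ ≤ m ^ (n + 1) := by
        rw [pow_succ']
        exact Nat.mul_le_mul_right _ (Nat.card_divisors_le_self m)

theorem pow_le_subCount_succ (n m : ℕ) [NeZero m] : m ^ n ≤ subCount (n + 1) m := by
  calc m ^ n = Nat.card ((Fin n → ℤ) →+ ZMod m) := by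
        rw [card_addMonoidHom_zmod, Module.finrank_fin_fun]
    _ ≤ subCount (n + 1) m := subCount_succ_s11 n m ▸ card_addMonoidHom_le_card_index_eq m

/-- For every positive `m` and `n ≥ 1`, `m^{n-1} ≤ f_n(m) ≤ m^n`. -/
theorem subCount_bounds (n m : ℕ) (hn : 1 ≤ n) (hm : 1 ≤ m) :
    m ^ (n - 1) ≤ subCount n m ∧ subCount n m ≤ m ^ n := by
  have : NeZero m := ⟨by omega⟩
  obtain ⟨k, rfl⟩ : ∃ k, n = k + 1 := ⟨n - 1, by omega⟩
  exact ⟨pow_le_subCount_succ k m, subCount_le_pow (k + 1) m⟩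
end

section
/- If m = p₁p₂⋯p_ℓ is squarefree, then all sublattices of ℤⁿ of index m are equivalent under unimodular transformations, i.e., there is exactly one equivalence class. -/
/-!
A sublattice `L` of index `m` has a quotient of squarefree order, hence cyclic, so `L` is the
kernel of a surjection `ℤⁿ → ℤ/m`. Lifting it to a linear form `ℤⁿ → ℤ` and dividing by a
generator of the image (a unit modulo `m`) gives a surjective form `f` with `L = f⁻¹(mℤ)`.
Any two surjective forms differ by an automorphism of `ℤⁿ`: `ℤⁿ ≅ ker f × ℤ`, and the kernels
are free of the same rank.
-/

/-- Two sublattices of `ℤⁿ` are equivalent if an automorphism of `ℤⁿ` maps one onto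
the other. -/
def latticeEquiv (n : ℕ) (H K : Submodule ℤ (Fin n → ℤ)) : Prop :=
  ∃ σ : (Fin n → ℤ) ≃ₗ[ℤ] (Fin n → ℤ), H.map (σ : (Fin n → ℤ) →ₗ[ℤ] (Fin n → ℤ)) = K

open Function LinearMap

theorem isAddCyclic_of_squarefree_natCard {G : Type*} [AddCommGroup G] [Finite G]
    (h : Squarefree (Nat.card G)) : IsAddCyclic G := by
  have : IsZGroup (Multiplicative G) := IsZGroup.of_squarefree h
  exact isCyclic_multiplicative_iff.mp inferInstance

section Ring

variable {R M N : Type*} [Ring R] [AddCommGroup M] [Module R M] [AddCommGroup N] [Module R N]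

theorem LinearMap.exists_linearEquiv_ker_prod (f : M →ₗ[R] R) (hf : Surjective f) :
    ∃ e : M ≃ₗ[R] ker f × R, ∀ x, (e x).2 = f x := by
  obtain ⟨y, hy⟩ := hf 1
  let split := (exact_subtype_ker_map f).splitSurjectiveEquiv (ker f).injective_subtype
    ⟨toSpanSingleton R M y, by ext; simp [hy]⟩
  exact ⟨split.1, fun x => (LinearMap.congr_fun split.2.2 x).symm⟩

theorem Submodule.map_comap_eq_comap_of_comp_eq {f g : M →ₗ[R] N} (σ : M ≃ₗ[R] M)
    (h : g ∘ₗ σ.toLinearMap = f) (I : Submodule R N) :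
    (I.comap f).map σ.toLinearMap = I.comap g := by
  rw [Submodule.map_equiv_eq_comap_symm, ← Submodule.comap_comp, ← h, LinearMap.comp_assoc]
  simp

end Ring

section PID

variable {R M : Type*} [CommRing R] [IsDomain R] [IsPrincipalIdealRing R]
  [AddCommGroup M] [Module R M]

theorem LinearMap.exists_surjective_smul_eq (c : M →ₗ[R] R) (hc : c ≠ 0) :
    ∃ (d : R) (f : M →ₗ[R] R), Surjective f ∧ c = d • f := by
  set d := Submodule.IsPrincipal.generator (range c)
  have hrange : range c = R ∙ d := (Submodule.IsPrincipal.span_singleton_generator _).symm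
  have hd : d ≠ 0 := by
    rintro h0
    rw [h0, Submodule.span_singleton_eq_bot.mpr rfl, range_eq_bot] at hrange
    exact hc hrange
  let e := LinearEquiv.toSpanNonzeroSingleton R R d hd
  refine ⟨d, e.symm.toLinearMap ∘ₗ (LinearEquiv.ofEq _ _ hrange).toLinearMap ∘ₗ c.rangeRestrict,
    ?_, ?_⟩
  · simpa using (LinearEquiv.ofEq _ _ hrange).surjective.comp c.surjective_rangeRestrict
  · ext x
    have := LinearEquiv.toSpanNonzeroSingleton_symm_apply_smul R R d hd
      (LinearEquiv.ofEq _ _ hrange (c.rangeRestrict x))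
    simp only [smul_apply, LinearEquiv.coe_coe, comp_apply, smul_eq_mul] at this ⊢
    rw [mul_comm, this]
    rfl

variable [Module.Free R M] [Module.Finite R M]

theorem LinearMap.exists_linearEquiv_comp_eq (f g : M →ₗ[R] R) (hf : Surjective f)
    (hg : Surjective g) : ∃ σ : M ≃ₗ[R] M, g ∘ₗ σ.toLinearMap = f := by
  obtain ⟨eF, heF⟩ := f.exists_linearEquiv_ker_prod hf
  obtain ⟨eG, heG⟩ := g.exists_linearEquiv_ker_prod hg
  have hrank : Module.finrank R (ker f) = Module.finrank R (ker g) := by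
    have hF := eF.finrank_eq
    have hG := eG.finrank_eq
    rw [Module.finrank_prod, Module.finrank_self] at hF hG
    omega
  obtain ⟨τ⟩ := FiniteDimensional.nonempty_linearEquiv_of_finrank_eq hrank
  refine ⟨eF.trans ((τ.prodCongr (LinearEquiv.refl R R)).trans eG.symm), ?_⟩
  ext x
  simpa [← heG] using heF x

end PID

section Int

variable {M : Type*} [AddCommGroup M] [Module.Projective ℤ M]

theorem AddMonoidHom.exists_surjective_linearMap_int_dvd_iff {m : ℕ} (hm : m ≠ 1)
    (φ : M →+ ZMod m) (hφ : Surjective φ) :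
    ∃ f : M →ₗ[ℤ] ℤ, Surjective f ∧ ∀ x, φ x = 0 ↔ (m : ℤ) ∣ f x := by
  obtain ⟨c, hc⟩ := Module.projective_lifting_property (Int.castAddHom (ZMod m)).toIntLinearMap
    φ.toIntLinearMap ZMod.intCast_surjective
  have hcφ : ∀ x, (c x : ZMod m) = φ x := fun x => LinearMap.congr_fun hc x
  have : Nontrivial (ZMod m) := ZMod.nontrivial_iff.mpr hm
  have hc0 : c ≠ 0 := by
    rintro rfl
    obtain ⟨x, hx⟩ := hφ 1
    simp [← hcφ] at hx
  obtain ⟨d, f, hf, rfl⟩ := c.exists_surjective_smul_eq hc0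
  have hφ' : ∀ x, φ x = d * f x := fun x => by simp [← hcφ]
  obtain ⟨x₁, hx₁⟩ := hφ 1
  have hd : IsUnit (d : ZMod m) := IsUnit.of_mul_eq_one _ ((hφ' x₁).symm.trans hx₁)
  refine ⟨f, hf, fun x => ?_⟩
  rw [hφ', hd.mul_right_eq_zero, ZMod.intCast_zmod_eq_zero_iff_dvd]

theorem Submodule.exists_surjective_eq_comap_of_squarefree_index {m : ℕ} (L : Submodule ℤ M)
    (hL : L.toAddSubgroup.index = m) (hm : Squarefree m) (hm1 : m ≠ 1) :
    ∃ f : M →ₗ[ℤ] ℤ, Surjective f ∧ L = Submodule.comap f (Ideal.span {(m : ℤ)}) := by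
  let G := M ⧸ L.toAddSubgroup
  have hG : Nat.card G = m := hL
  have : Finite G := Nat.finite_of_card_ne_zero (hG ▸ hm.ne_zero)
  let ι := zmodAddCyclicAddEquiv (isAddCyclic_of_squarefree_natCard (hG ▸ hm))
  let φ := ι.symm.toAddMonoidHom.comp (QuotientAddGroup.mk' L.toAddSubgroup)
  obtain ⟨f, hf, hφf⟩ := φ.exists_surjective_linearMap_int_dvd_iff (hG ▸ hm1)
    (ι.symm.surjective.comp (QuotientAddGroup.mk'_surjective _))
  refine ⟨f, hf, Submodule.ext fun x => ?_⟩
  rw [mem_comap, Ideal.mem_span_singleton, ← hG, ← hφf]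
  simp only [φ, AddMonoidHom.comp_apply, AddEquiv.coe_toAddMonoidHom,
    map_eq_zero_iff _ ι.symm.injective]
  exact (QuotientAddGroup.eq_zero_iff (N := L.toAddSubgroup) x).symm

end Int

/-- If `m` is squarefree, then any two sublattices of `ℤⁿ` of index `m` are equivalent
under a unimodular transformation. -/
theorem sublattices_equiv_of_squarefree (n m : ℕ) (hm : Squarefree m)
    (H K : Submodule ℤ (Fin n → ℤ))
    (hH : H.toAddSubgroup.index = m) (hK : K.toAddSubgroup.index = m) :
    latticeEquiv n H K := by
  by_cases hm1 : m = 1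
  · subst hm1
    rw [AddSubgroup.index_eq_one, Submodule.toAddSubgroup_eq_top] at hH hK
    exact ⟨LinearEquiv.refl ℤ _, by simp [hH, hK]⟩
  obtain ⟨f, hf, rfl⟩ := H.exists_surjective_eq_comap_of_squarefree_index hH hm hm1
  obtain ⟨g, hg, rfl⟩ := K.exists_surjective_eq_comap_of_squarefree_index hK hm hm1
  obtain ⟨σ, hσ⟩ := f.exists_linearEquiv_comp_eq g hf hg
  exact ⟨σ, Submodule.map_comap_eq_comap_of_comp_eq σ hσ _⟩
end

section
/- If m = p₁p₂⋯p_ℓ is a product of distinct primes, then the number of sublattices of ℤⁿ of index m equals ∏_{i=1}^{ℓ} (1 + p_i + ⋯ + p_i^{n-1}). -/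
/-!
An index-`m` subgroup of `ℤⁿ` contains `mℤⁿ`, so it is the preimage of an index-`m` subgroup of
`(ℤ/m)ⁿ ≃ ∏ᵢ (ℤ/pᵢ)ⁿ`. The factors have pairwise coprime orders, so every subgroup of the product
is the product of its projections, and its index is the product of their indices; the count
therefore factors over `i`. An index-`p` subgroup of `(ℤ/p)ⁿ` is a hyperplane of `𝔽ₚⁿ`, and by
duality the hyperplanes are the points of the projective space of the dual, of which there are
`1 + p + ⋯ + p^(n-1)`.
-/

open Finset Module

theorem Nat.eq_of_prod_eq_of_dvd_of_coprime {ι : Type*} [Fintype ι]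
    {c d t : ι → ℕ} (hc : ∀ i, c i ≠ 0) (ht : ∀ i, t i ∣ c i)
    (hd : Pairwise fun i j => (d i).Coprime (c j)) (h : ∏ i, t i = ∏ i, d i) : t = d := by
  classical
  have htd : ∀ i, t i ∣ d i := by
    intro i
    have hcop : (t i).Coprime (∏ j ∈ univ.erase i, d j) :=
      Nat.Coprime.prod_right fun j hj =>
        ((hd (ne_of_mem_erase hj)).symm).coprime_dvd_left (ht i)
    refine hcop.dvd_of_dvd_mul_right ?_
    rw [mul_prod_erase _ _ (mem_univ i), ← h]
    exact dvd_prod_of_mem t (mem_univ i)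
  have ht0 : ∀ i, 0 < t i := fun i => Nat.pos_of_ne_zero (ne_zero_of_dvd_ne_zero (hc i) (ht i))
  have hd0 : ∀ i, 0 < d i := fun i => Nat.pos_of_ne_zero fun h0 =>
    (prod_pos fun j _ => ht0 j).ne' (h.trans (prod_eq_zero (mem_univ i) h0))
  by_contra hne
  obtain ⟨i, hi⟩ := Function.ne_iff.mp hne
  have hlt : ∏ i, t i < ∏ i, d i :=
    prod_lt_prod (fun i _ => ht0 i) (fun i _ => Nat.le_of_dvd (hd0 i) (htd i))
      ⟨i, mem_univ i, (Nat.le_of_dvd (hd0 i) (htd i)).lt_of_ne hi⟩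
  exact hlt.ne h

theorem nsmul_eq_nsmul_of_modEq_natCard {G : Type*} [AddGroup G] {a b : ℕ}
    (h : a ≡ b [MOD Nat.card G]) (x : G) : a • x = b • x := by
  rw [← mod_natCard_nsmul, h, mod_natCard_nsmul]

theorem Subspace.card_finrank_quotient_eq_one (K V : Type*) [Field K] [Finite K]
    [AddCommGroup V] [Module K V] [FiniteDimensional K V] :
    Nat.card {W : Subspace K V // finrank K (V ⧸ W) = 1}
      = ∑ i ∈ range (finrank K V), Nat.card K ^ i := by
  have e : {W : Subspace K V // finrank K (V ⧸ W) = 1}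
      ≃ {U : Subspace K (Dual K V) // finrank K U = 1} :=
    (Subspace.orderIsoFiniteDimensional.toEquiv.trans OrderDual.ofDual).subtypeEquiv
      fun W => by rw [W.quotEquivAnnihilator.finrank_eq]; rfl
  rw [Nat.card_congr (e.trans (Projectivization.equivSubmodule K _).symm),
    Projectivization.card_of_finrank K _ Subspace.dual_finrank_eq]

namespace AddSubgroup

theorem card_index_eq_of_surjective {G G' : Type*} [AddCommGroup G] [AddGroup G']
    {f : G →+ G'} (hf : Function.Surjective f) {m : ℕ}
    (hker : ∀ x ∈ f.ker, ∃ y, x = m • y) :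
    Nat.card {H : AddSubgroup G // H.index = m}
      = Nat.card {K : AddSubgroup G' // K.index = m} := by
  have hle : ∀ H : AddSubgroup G, H.index = m → f.ker ≤ H := by
    intro H hH x hx
    obtain ⟨y, rfl⟩ := hker x hx
    exact hH ▸ H.nsmul_index_mem y
  have hcomap : ∀ H : AddSubgroup G, H.index = m → (H.map f).comap f = H := fun H hH =>
    (comap_map_eq f H).trans (sup_of_le_left (hle H hH))
  exact Nat.card_congr
    { toFun H := ⟨H.1.map f, by
        rw [← index_comap_of_surjective _ hf, hcomap H.1 H.2, H.2]⟩
      invFun K := ⟨K.1.comap f, (K.1.index_comap_of_surjective hf).trans K.2⟩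
      left_inv H := Subtype.ext (hcomap H.1 H.2)
      right_inv K := Subtype.ext (map_comap_eq_self_of_surjective hf K.1) }

theorem card_index_prime_eq_geom_sum (p : ℕ) [hp : Fact p.Prime] (V : Type*) [AddCommGroup V]
    [Module (ZMod p) V] [Finite V] :
    Nat.card {H : AddSubgroup V // H.index = p}
      = ∑ j ∈ range (finrank (ZMod p) V), p ^ j := by
  have e : {H : AddSubgroup V // H.index = p}
      ≃ {W : Subspace (ZMod p) V // finrank (ZMod p) (V ⧸ W) = 1} :=
    (toZModSubmodule p).toEquiv.subtypeEquiv fun H => by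
      change Nat.card (V ⧸ toZModSubmodule p H) = p ↔ _
      rw [Module.natCard_eq_pow_finrank (K := ZMod p), Nat.card_zmod,
        Nat.pow_eq_self_iff hp.out.one_lt]
      rfl
  rw [Nat.card_congr e, Subspace.card_finrank_quotient_eq_one, Nat.card_zmod]

section AddGroup

variable {ι : Type*} {A : ι → Type*} [∀ i, AddGroup (A i)]

theorem map_eval_univ_pi [DecidableEq ι] (K : ∀ i, AddSubgroup (A i)) (i : ι) :
    (pi Set.univ K).map (Pi.evalAddMonoidHom A i) = K i := by
  refine le_antisymm ?_ fun y hy => ⟨Pi.single i y, fun j _ => ?_, Pi.single_eq_same i y⟩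
  · rintro _ ⟨x, hx, rfl⟩
    exact hx i (Set.mem_univ i)
  · by_cases h : j = i
    · subst h; simpa using hy
    · simp [Pi.single_eq_of_ne h]

theorem index_univ_pi [Fintype ι] (K : ∀ i, AddSubgroup (A i)) :
    (pi Set.univ K).index = ∏ i, (K i).index := by
  simp_rw [index, ← Nat.card_pi]
  refine Nat.card_congr
    ((Quotient.congrRight (fun x y ↦ ?_)).trans (Setoid.piQuotientEquiv _).symm)
  rw [QuotientAddGroup.leftRel_pi]

theorem single_mem_of_coprime [Fintype ι] [DecidableEq ι]
    (hco : Pairwise fun i j => (Nat.card (A i)).Coprime (Nat.card (A j)))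
    {K : AddSubgroup (∀ i, A i)} {x : ∀ i, A i} (hx : x ∈ K) (i : ι) : Pi.single i (x i) ∈ K := by
  have hcop : (Nat.card (A i)).Coprime (∏ j ∈ univ.erase i, Nat.card (A j)) :=
    Nat.Coprime.prod_right fun j hj => hco (ne_of_mem_erase hj).symm
  -- a multiplier that is `1` on the `i`-th factor and `0` on all the others
  obtain ⟨c, hc_one, hc_zero⟩ := Nat.chineseRemainder hcop 1 0
  suffices c • x = Pi.single i (x i) from this ▸ K.nsmul_mem hx c
  ext j
  by_cases h : j = i
  · subst h
    simp [nsmul_eq_nsmul_of_modEq_natCard hc_one]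
  · have hdvd : Nat.card (A j) ∣ c := (dvd_prod_of_mem _ (mem_erase.mpr ⟨h, mem_univ j⟩)).trans
      (Nat.modEq_zero_iff_dvd.mp hc_zero)
    simp [Pi.single_eq_of_ne h, nsmul_eq_nsmul_of_modEq_natCard
      (Nat.modEq_zero_iff_dvd.mpr hdvd)]

end AddGroup

section Coprime

variable {ι : Type*} [Fintype ι] [DecidableEq ι] {A : ι → Type*} [∀ i, AddCommGroup (A i)]
variable (hco : Pairwise fun i j => (Nat.card (A i)).Coprime (Nat.card (A j)))
include hco

theorem eq_univ_pi_map_eval_of_coprime (K : AddSubgroup (∀ i, A i)) :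
    K = pi Set.univ fun i => K.map (Pi.evalAddMonoidHom A i) := by
  refine le_antisymm (fun x hx i _ => ⟨x, hx, rfl⟩) fun x hx => ?_
  choose k hk hki using fun i => hx i (Set.mem_univ i)
  rw [← univ_sum_single x]
  refine sum_mem fun i _ => ?_
  rw [← hki i]
  exact single_mem_of_coprime hco (hk i) i

def univPiEquivOfCoprime : (∀ i, AddSubgroup (A i)) ≃ AddSubgroup (∀ i, A i) where
  toFun := pi Set.univ
  invFun K i := K.map (Pi.evalAddMonoidHom A i)
  left_inv K := funext (map_eval_univ_pi K)
  right_inv K := (eq_univ_pi_map_eval_of_coprime hco K).symm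

theorem card_index_prod_eq_prod_card_index [∀ i, Finite (A i)] (d : ι → ℕ)
    (hd : Pairwise fun i j => (d i).Coprime (Nat.card (A j))) :
    Nat.card {K : AddSubgroup (∀ i, A i) // K.index = ∏ i, d i}
      = ∏ i, Nat.card {K : AddSubgroup (A i) // K.index = d i} := by
  have hindex : ∀ K : ∀ i, AddSubgroup (A i),
      (∀ i, (K i).index = d i) ↔ (univPiEquivOfCoprime hco K).index = ∏ i, d i := by
    intro K
    change _ ↔ (pi Set.univ K).index = _
    rw [index_univ_pi]
    refine ⟨fun h => prod_congr rfl fun i _ => h i, fun h => congrFun ?_⟩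
    exact Nat.eq_of_prod_eq_of_dvd_of_coprime (fun i => Nat.card_pos.ne')
      (fun i => (K i).index_dvd_card) hd h
  rw [← Nat.card_pi, ← Nat.card_congr ((univPiEquivOfCoprime hco).subtypeEquiv hindex)]
  exact Nat.card_congr
    (Equiv.subtypePiEquivPi (p := fun i (K : AddSubgroup (A i)) => K.index = d i))

end Coprime

end AddSubgroup


/-- If `m = p₁p₂⋯p_ℓ` is a product of distinct primes, then the number of sublattices
of `ℤⁿ` of index `m` equals `∏ᵢ (1 + pᵢ + ⋯ + pᵢ^{n-1})`. -/
theorem subCount_squarefree (n m ℓ : ℕ) (p : Fin ℓ → ℕ)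
    (hp : ∀ i, (p i).Prime) (hinj : Function.Injective p)
    (hfact : m = ∏ i, p i) :
    subCount n m = ∏ i : Fin ℓ, ∑ j ∈ Finset.range n, p i ^ j := by
  subst hfact
  have hcop : Pairwise (Function.onFun Nat.Coprime p) := fun i j hij =>
    (Nat.coprime_primes (hp i) (hp j)).mpr (hinj.ne hij)
  have hcard : ∀ i, Nat.card (Fin n → ZMod (p i)) = p i ^ n := fun i => by
    rw [Nat.card_fun, Nat.card_zmod, Nat.card_eq_fintype_card, Fintype.card_fin]
  let reduce := (Int.castAddHom (ZMod (∏ i, p i))).compLeft (Fin n)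
  let crt : (Fin n → ZMod (∏ i, p i)) ≃+ ∀ i, Fin n → ZMod (p i) :=
    (AddEquiv.piCongrRight fun _ => (ZMod.prodEquivPi p hcop).toAddEquiv).trans
      (AddEquiv.mk' (Equiv.piComm _) fun _ _ => rfl)
  have hker : ∀ x ∈ (crt.toAddMonoidHom.comp reduce).ker, ∃ y, x = (∏ i, p i) • y := by
    intro x hx
    have hdvd : ∀ j, ((∏ i, p i : ℕ) : ℤ) ∣ x j := fun j =>
      (ZMod.intCast_zmod_eq_zero_iff_dvd _ _).mp (congrFun (crt.map_eq_zero_iff.mp hx) j)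
    refine ⟨fun j => x j / (∏ i, p i : ℕ), funext fun j => ?_⟩
    rw [Pi.smul_apply, nsmul_eq_mul, Int.mul_ediv_cancel' (hdvd j)]
  have : ∀ i, Fact (p i).Prime := fun i => ⟨hp i⟩
  rw [subCount, AddSubgroup.card_index_eq_of_surjective
      (crt.surjective.comp (ZMod.intCast_surjective.comp_left)) hker,
    AddSubgroup.card_index_prod_eq_prod_card_index
      (fun i j hij => by simpa only [hcard] using (hcop hij).pow n n) p
      (fun i j hij => by simpa only [hcard] using (hcop hij).pow_right n)]
  simp_rw [AddSubgroup.card_index_prime_eq_geom_sum, Module.finrank_fin_fun]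
end
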